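/- Let p be an odd prime, F a finite field of characteristic p with q = |F| elements, Tr : F → ZMod p the field trace, and ζ = exp(2πi/p) ∈ ℂ. On V = F × F define, for v = (v₁,v₂), the Weyl operator W v as the q×q complex matrix indexed by F with entries (W v)_{x,y} = ζ^{Tr(v₂·(x − 2⁻¹·v₁))} if y = x − v₁ and 0 otherwise, where 2⁻¹ is the inverse of 2 in F and the exponent is taken via the canonical lift of ZMod p to ℕ. Let T be a positive semidefinite q×q complex matrix with Tr T = 1, and define G_T(v) = (1/q) • (W v · T · (W v)ᴴ) for v ∈ V. Then the following are equivalent: (i) G_T is a SIC POVM, i.e. Tr(G_T(v) · G_T(w)) = 1/(q²(q+1)) for all v ≠ w in V and Tr((G_T(v))²) = 1/q² for all v; (ii) for every v ∈ V, |Tr(T · W v)|² = (1 + q·δ_{v,0})/(q+1), where δ_{v,0} = 1 if v = (0,0) and 0 otherwise. -/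

import Mathlib

open Matrix
open scoped Classical ComplexOrder

/-- The trace of a finite field `F` of characteristic `p` over its prime field `ZMod p`. -/
noncomputable def zmodTrace (p : ℕ) [Fact p.Prime] (F : Type*) [Field F] [Fintype F]
    [CharP F p] (x : F) : ZMod p :=
  letI : Algebra (ZMod p) F := ZMod.algebra F p
  Algebra.trace (ZMod p) F x

/-- The Weyl operator `W v` on `ℓ²(F)` associated with the phase-space point
`v = (v₁, v₂) ∈ F × F`:  `(W v) f (x) = ζ^Tr(v₂(x − 2⁻¹v₁)) f(x − v₁)` where
`ζ = exp(2πi/p)`. -/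
noncomputable def weyl (p : ℕ) [Fact p.Prime] (F : Type*) [Field F] [Fintype F]
    [DecidableEq F] [CharP F p] (v : F × F) : Matrix F F ℂ :=
  Matrix.of fun x y =>
    if y = x - v.1 then
      Complex.exp (2 * (Real.pi : ℂ) * Complex.I / (p : ℂ)) ^
        (zmodTrace p F (v.2 * (x - (2 : F)⁻¹ * v.1))).val
    else 0

/-- The covariant phase-space observable generated by `T`:
`G_T(v) = (1/q) • W v · T · (W v)ᴴ`. -/
noncomputable def phaseObs (p : ℕ) [Fact p.Prime] (F : Type*) [Field F] [Fintype F]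
    [DecidableEq F] [CharP F p] (T : Matrix F F ℂ) (v : F × F) : Matrix F F ℂ :=
  ((1 : ℂ) / (Fintype.card F : ℂ)) • (weyl p F v * T * (weyl p F v)ᴴ)

/-!
Write `ψ` for a primitive additive character of `F` (here `x ↦ ζ ^ Tr x`) and `ω` for the
symplectic form. The Weyl operators satisfy `W v * W w = ψ (ω(v, w) / 2) • W (v + w)` and are
complete: `∑ a, Tr (W a * A) * Tr (W (-a) * B) = q * Tr (A * B)`. Hence
`Tr (G v * G w) = q⁻² f (w - v)` with `f u = Tr (W (-u) * T * W u * T)`, and `f` is the symplectic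
Fourier transform of `g a = Tr (T * W a) * Tr (T * W (-a)) = |Tr (T * W a)|²`. The symplectic
Fourier transform is an involution fixing the profile `(1 + q δ₀) / (q + 1)`, so `f` equals this
profile, which is the SIC condition, if and only if `g` does.
-/

section SymplecticFourier

variable {R : Type*} [CommRing R] [Fintype R] [DecidableEq R]

def symplecticForm (u a : R × R) : R := u.2 * a.1 - u.1 * a.2

noncomputable def symplecticFourier (ψ : AddChar R ℂ) (φ : R × R → ℂ) (u : R × R) : ℂ :=
  (Fintype.card R : ℂ)⁻¹ * ∑ a, φ a * ψ (symplecticForm u a)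

variable (R) in
noncomputable def sicProfile (a : R × R) : ℂ :=
  (1 + (Fintype.card R : ℂ) * (if a = 0 then 1 else 0)) / ((Fintype.card R : ℂ) + 1)

lemma sicProfile_zero : sicProfile R 0 = 1 := by
  rw [sicProfile, if_pos rfl, mul_one, add_comm, div_self (Nat.cast_add_one_ne_zero _)]

lemma sicProfile_of_ne_zero {a : R × R} (ha : a ≠ 0) :
    sicProfile R a = 1 / ((Fintype.card R : ℂ) + 1) := by
  rw [sicProfile, if_neg ha, mul_zero, add_zero]

variable {ψ : AddChar R ℂ}

lemma sum_symplecticForm (hψ : ψ.IsPrimitive) (c : R × R) :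
    ∑ a, ψ (symplecticForm c a) = if c = 0 then (Fintype.card R : ℂ) ^ 2 else 0 := by
  have split (a : R × R) : ψ (symplecticForm c a) = ψ (a.1 * c.2) * ψ (a.2 * -c.1) := by
    rw [← AddChar.map_add_eq_mul, symplecticForm]
    ring_nf
  simp only [split, Fintype.sum_prod_type, ← Finset.mul_sum, ← Finset.sum_mul,
    AddChar.sum_mulShift _ hψ, neg_eq_zero, Prod.ext_iff, Prod.fst_zero, Prod.snd_zero]
  by_cases h1 : c.1 = 0 <;> by_cases h2 : c.2 = 0 <;> simp [h1, h2, sq]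

lemma symplecticFourier_symplecticFourier (hψ : ψ.IsPrimitive) (φ : R × R → ℂ) :
    symplecticFourier ψ (symplecticFourier ψ φ) = φ := by
  funext b
  have hq : (Fintype.card R : ℂ) ≠ 0 := Nat.cast_ne_zero.mpr Fintype.card_ne_zero
  have phase (u a : R × R) :
      ψ (symplecticForm u a) * ψ (symplecticForm b u) = ψ (symplecticForm (b - a) u) := by
    rw [← AddChar.map_add_eq_mul, symplecticForm, symplecticForm, symplecticForm]
    congr 1
    simp only [Prod.fst_sub, Prod.snd_sub]
    ring
  calc symplecticFourier ψ (symplecticFourier ψ φ) b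
      = ((Fintype.card R : ℂ) ^ 2)⁻¹ * ∑ a, φ a * ∑ u, ψ (symplecticForm (b - a) u) := by
        simp only [symplecticFourier, Finset.mul_sum, Finset.sum_mul, ← phase]
        rw [Finset.sum_comm]
        refine Finset.sum_congr rfl fun a _ => Finset.sum_congr rfl fun u _ => ?_
        ring
    _ = φ b := by
        simp only [sum_symplecticForm hψ, sub_eq_zero, mul_ite, mul_zero,
          Finset.sum_ite_eq, Finset.mem_univ, if_true]
        field_simp

lemma symplecticFourier_sicProfile (hψ : ψ.IsPrimitive) :
    symplecticFourier ψ (sicProfile R) = sicProfile R := by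
  funext u
  have hq : (Fintype.card R : ℂ) ≠ 0 := Nat.cast_ne_zero.mpr Fintype.card_ne_zero
  have hq1 : (Fintype.card R : ℂ) + 1 ≠ 0 := Nat.cast_add_one_ne_zero _
  have split (a : R × R) : sicProfile R a * ψ (symplecticForm u a) =
      (ψ (symplecticForm u a) + if a = 0 then (Fintype.card R : ℂ) else 0) /
        ((Fintype.card R : ℂ) + 1) := by
    by_cases ha : a = 0
    · simp only [ha, sicProfile_zero, symplecticForm, Prod.fst_zero, Prod.snd_zero, mul_zero,
        sub_zero, AddChar.map_zero_eq_one, if_true]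
      field_simp
      ring
    · rw [sicProfile_of_ne_zero ha, if_neg ha, add_zero, one_div, inv_mul_eq_div]
  rw [symplecticFourier, Finset.sum_congr rfl fun a _ => split a, ← Finset.sum_div,
    Finset.sum_add_distrib, sum_symplecticForm hψ, Finset.sum_ite_eq' Finset.univ (0 : R × R),
    if_pos (Finset.mem_univ _), sicProfile]
  split_ifs <;> field_simp <;> ring

lemma symplecticFourier_eq_sicProfile_iff (hψ : ψ.IsPrimitive) (φ : R × R → ℂ) :
    symplecticFourier ψ φ = sicProfile R ↔ φ = sicProfile R := by
  constructor
  · intro h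
    rw [← symplecticFourier_symplecticFourier hψ φ, h, symplecticFourier_sicProfile hψ]
  · rintro rfl
    exact symplecticFourier_sicProfile hψ

end SymplecticFourier

section Weyl

variable {F : Type*} [Field F] [DecidableEq F] (ψ : AddChar F ℂ)

noncomputable def weylOp (v : F × F) : Matrix F F ℂ :=
  of fun x y => if y = x - v.1 then ψ (v.2 * (x - 2⁻¹ * v.1)) else 0

lemma weylOp_apply (v : F × F) (x y : F) :
    weylOp ψ v x y = if y = x - v.1 then ψ (v.2 * (x - 2⁻¹ * v.1)) else 0 := rfl

variable {ψ} [Fintype F]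

lemma weylOp_mul_weylOp (h2 : (2 : F) ≠ 0) (v w : F × F) :
    weylOp ψ v * weylOp ψ w = ψ (symplecticForm v w * 2⁻¹) • weylOp ψ (v + w) := by
  ext x z
  simp only [mul_apply, weylOp_apply, Matrix.smul_apply, smul_eq_mul, ite_mul, zero_mul,
    Finset.sum_ite_eq', Finset.mem_univ, if_true, Prod.fst_add, Prod.snd_add, ← sub_sub]
  split_ifs
  · rw [← AddChar.map_add_eq_mul, ← AddChar.map_add_eq_mul, symplecticForm]
    congr 1
    linear_combination (v.1 * w.2) * inv_mul_cancel₀ h2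
  · simp only [mul_zero]

lemma conjTranspose_weylOp (h2 : (2 : F) ≠ 0) (v : F × F) :
    (weylOp ψ v)ᴴ = weylOp ψ (-v) := by
  ext x y
  simp only [conjTranspose_apply, weylOp_apply, Prod.fst_neg, Prod.snd_neg, sub_neg_eq_add]
  by_cases h : x = y - v.1
  · subst h
    rw [if_pos rfl, if_pos (sub_add_cancel y v.1).symm, RCLike.star_def,
      ← AddChar.map_neg_eq_conj]
    congr 1
    linear_combination (v.1 * v.2) * inv_mul_cancel₀ h2
  · rw [if_neg h, if_neg (fun h' => h (eq_sub_of_add_eq h'.symm)), star_zero]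

lemma weylOp_mul_weylOp_mul_weylOp_neg (h2 : (2 : F) ≠ 0) (u a : F × F) :
    weylOp ψ u * weylOp ψ a * weylOp ψ (-u) = ψ (symplecticForm u a) • weylOp ψ a := by
  rw [weylOp_mul_weylOp h2, smul_mul, weylOp_mul_weylOp h2, smul_smul,
    ← AddChar.map_add_eq_mul, add_neg_cancel_comm]
  congr 2
  simp only [symplecticForm, Prod.fst_add, Prod.snd_add, Prod.fst_neg, Prod.snd_neg]
  linear_combination (u.2 * a.1 - u.1 * a.2) * inv_mul_cancel₀ h2

lemma trace_weylOp_mul (A : Matrix F F ℂ) (a : F × F) :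
    (weylOp ψ a * A).trace = ∑ x, ψ (a.2 * (x - 2⁻¹ * a.1)) * A (x - a.1) x := by
  simp only [trace, diag_apply, mul_apply, weylOp_apply, ite_mul, zero_mul,
    Finset.sum_ite_eq', Finset.mem_univ, if_true]

lemma sum_trace_weylOp_mul_mul_trace_weylOp_neg_mul (h2 : (2 : F) ≠ 0) (hψ : ψ.IsPrimitive)
    (A B : Matrix F F ℂ) :
    ∑ a, (weylOp ψ a * A).trace * (weylOp ψ (-a) * B).trace =
      Fintype.card F * (A * B).trace := by
  have phase (a : F × F) (x y : F) :
      ψ (a.2 * (x - 2⁻¹ * a.1)) * ψ (-a.2 * (y - 2⁻¹ * -a.1)) = ψ (a.2 * (x - y - a.1)) := by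
    rw [← AddChar.map_add_eq_mul]
    congr 1
    linear_combination (-(a.1 * a.2)) * inv_mul_cancel₀ h2
  calc ∑ a, (weylOp ψ a * A).trace * (weylOp ψ (-a) * B).trace
      = ∑ x, ∑ y, ∑ a₁, A (x - a₁) x * B (y + a₁) y * ∑ a₂, ψ (a₂ * (x - y - a₁)) := by
        simp only [trace_weylOp_mul, Finset.sum_mul_sum, Prod.fst_neg, Prod.snd_neg,
          sub_neg_eq_add]
        rw [Finset.sum_comm]
        refine Finset.sum_congr rfl fun x _ => ?_
        rw [Finset.sum_comm]
        refine Finset.sum_congr rfl fun y _ => ?_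
        rw [Fintype.sum_prod_type]
        refine Finset.sum_congr rfl fun a₁ _ => ?_
        rw [Finset.mul_sum]
        refine Finset.sum_congr rfl fun a₂ _ => ?_
        rw [← phase (a₁, a₂)]
        ring
    _ = ∑ x, ∑ y, A y x * B x y * Fintype.card F := by
        simp only [AddChar.sum_mulShift _ hψ, Nat.cast_ite, Nat.cast_zero, sub_eq_zero, mul_ite,
          mul_zero, Finset.sum_ite_eq, Finset.mem_univ, if_true, sub_sub_cancel, add_sub_cancel]
    _ = Fintype.card F * (A * B).trace := by
        rw [Finset.sum_comm]
        simp only [trace, diag_apply, mul_apply, Finset.sum_mul, mul_comm (Fintype.card F : ℂ)]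

lemma trace_mul_weylOp_mul_symplecticForm (h2 : (2 : F) ≠ 0) (T : Matrix F F ℂ) (u a : F × F) :
    (T * weylOp ψ a).trace * ψ (symplecticForm u a) =
      (weylOp ψ a * (weylOp ψ (-u) * T * weylOp ψ u)).trace :=
  calc (T * weylOp ψ a).trace * ψ (symplecticForm u a)
      = (ψ (symplecticForm u a) • weylOp ψ a * T).trace := by
        rw [smul_mul, trace_smul, trace_mul_comm, smul_eq_mul, mul_comm]
    _ = (weylOp ψ u * weylOp ψ a * weylOp ψ (-u) * T).trace := by
        rw [weylOp_mul_weylOp_mul_weylOp_neg h2]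
    _ = (weylOp ψ a * (weylOp ψ (-u) * T * weylOp ψ u)).trace := by
        rw [Matrix.mul_assoc, Matrix.mul_assoc, trace_mul_comm]
        simp only [Matrix.mul_assoc]

lemma symplecticFourier_trace_mul_weylOp (h2 : (2 : F) ≠ 0) (hψ : ψ.IsPrimitive)
    (T : Matrix F F ℂ) :
    symplecticFourier ψ (fun a => (T * weylOp ψ a).trace * (T * weylOp ψ (-a)).trace) =
      fun u => (weylOp ψ (-u) * T * weylOp ψ u * T).trace := by
  funext u
  have hq : (Fintype.card F : ℂ) ≠ 0 := Nat.cast_ne_zero.mpr Fintype.card_ne_zero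
  calc symplecticFourier ψ (fun a => (T * weylOp ψ a).trace * (T * weylOp ψ (-a)).trace) u
      = (Fintype.card F : ℂ)⁻¹ * ∑ a, (weylOp ψ a * (weylOp ψ (-u) * T * weylOp ψ u)).trace *
          (weylOp ψ (-a) * T).trace := by
        simp only [symplecticFourier]
        congr 1
        refine Finset.sum_congr rfl fun a _ => ?_
        rw [mul_right_comm, trace_mul_weylOp_mul_symplecticForm h2, trace_mul_comm T]
    _ = (weylOp ψ (-u) * T * weylOp ψ u * T).trace := by
        rw [sum_trace_weylOp_mul_mul_trace_weylOp_neg_mul h2 hψ, inv_mul_cancel_left₀ hq]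

lemma trace_weylOp_conj_mul_weylOp_conj (h2 : (2 : F) ≠ 0) (T : Matrix F F ℂ) (v w : F × F) :
    (weylOp ψ v * T * (weylOp ψ v)ᴴ * (weylOp ψ w * T * (weylOp ψ w)ᴴ)).trace =
      (weylOp ψ (-(w - v)) * T * weylOp ψ (w - v) * T).trace := by
  have phases : symplecticForm (-v) w * 2⁻¹ + symplecticForm (-w) v * 2⁻¹ = 0 := by
    simp only [symplecticForm, Prod.fst_neg, Prod.snd_neg]
    ring
  calc (weylOp ψ v * T * (weylOp ψ v)ᴴ * (weylOp ψ w * T * (weylOp ψ w)ᴴ)).trace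
      = (weylOp ψ (-w) * weylOp ψ v * T * (weylOp ψ (-v) * weylOp ψ w) * T).trace := by
        rw [conjTranspose_weylOp h2, conjTranspose_weylOp h2, ← Matrix.mul_assoc, trace_mul_comm]
        simp only [Matrix.mul_assoc]
    _ = (weylOp ψ (-(w - v)) * T * weylOp ψ (w - v) * T).trace := by
        simp only [weylOp_mul_weylOp h2, Matrix.smul_mul, Matrix.mul_smul, smul_smul,
          ← AddChar.map_add_eq_mul, phases, AddChar.map_zero_eq_one, one_smul, neg_add_eq_sub,
          neg_sub]

lemma trace_mul_weylOp_neg (h2 : (2 : F) ≠ 0) {T : Matrix F F ℂ} (hT : T.IsHermitian)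
    (a : F × F) : (T * weylOp ψ (-a)).trace = star (T * weylOp ψ a).trace := by
  rw [← conjTranspose_weylOp h2, ← trace_conjTranspose, conjTranspose_mul, hT.eq,
    trace_mul_comm]

end Weyl

section SIC
variable {F : Type*} [Field F] [DecidableEq F] [Fintype F] {ψ : AddChar F ℂ}

noncomputable def covariantObs (ψ : AddChar F ℂ) (T : Matrix F F ℂ) (v : F × F) :
    Matrix F F ℂ :=
  ((1 : ℂ) / Fintype.card F) • (weylOp ψ v * T * (weylOp ψ v)ᴴ)

lemma trace_covariantObs_mul_covariantObs (h2 : (2 : F) ≠ 0) (T : Matrix F F ℂ) (v w : F × F) :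
    (covariantObs ψ T v * covariantObs ψ T w).trace =
      1 / (Fintype.card F : ℂ) ^ 2 * (weylOp ψ (-(w - v)) * T * weylOp ψ (w - v) * T).trace := by
  rw [covariantObs, covariantObs, smul_mul_smul_comm, trace_smul,
    trace_weylOp_conj_mul_weylOp_conj h2, smul_eq_mul, div_mul_div_comm, one_mul, sq]

lemma covariantObs_sic_iff (h2 : (2 : F) ≠ 0) (T : Matrix F F ℂ) :
    ((∀ v w : F × F, v ≠ w → (covariantObs ψ T v * covariantObs ψ T w).trace =
          1 / ((Fintype.card F : ℂ) ^ 2 * ((Fintype.card F : ℂ) + 1))) ∧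
      ∀ v : F × F, (covariantObs ψ T v * covariantObs ψ T v).trace =
          1 / (Fintype.card F : ℂ) ^ 2) ↔
    ∀ u, (weylOp ψ (-u) * T * weylOp ψ u * T).trace = sicProfile F u := by
  have hq : (Fintype.card F : ℂ) ≠ 0 := Nat.cast_ne_zero.mpr Fintype.card_ne_zero
  have hq1 : (Fintype.card F : ℂ) + 1 ≠ 0 := Nat.cast_add_one_ne_zero _
  simp only [trace_covariantObs_mul_covariantObs h2, sub_self]
  constructor
  · rintro ⟨hne, hdiag⟩ u
    by_cases hu : u = 0
    · subst hu
      have h := hdiag 0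
      rw [sicProfile_zero]
      field_simp at h
      simpa using h
    · have h := hne 0 u (Ne.symm hu)
      rw [sub_zero] at h
      rw [sicProfile_of_ne_zero hu]
      field_simp at h ⊢
      linear_combination h
  · intro h
    refine ⟨fun v w hvw => ?_, fun v => ?_⟩
    · rw [h, sicProfile_of_ne_zero (sub_ne_zero.2 hvw.symm)]
      field_simp
    · rw [h, sicProfile_zero]
      field_simp

lemma norm_sq_trace_mul_weylOp_iff (h2 : (2 : F) ≠ 0) {T : Matrix F F ℂ} (hT : T.IsHermitian) :
    (∀ v : F × F, ‖(T * weylOp ψ v).trace‖ ^ 2 =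
        (1 + (Fintype.card F : ℝ) * (if v = 0 then 1 else 0)) / ((Fintype.card F : ℝ) + 1)) ↔
      ∀ a, (T * weylOp ψ a).trace * (T * weylOp ψ (-a)).trace = sicProfile F a := by
  refine forall_congr' fun a => ?_
  rw [trace_mul_weylOp_neg h2 hT, RCLike.star_def, Complex.mul_conj', ← Complex.ofReal_pow,
    sicProfile, ← Complex.ofReal_inj]
  split_ifs <;> push_cast <;> rfl

end SIC

noncomputable def traceChar (p : ℕ) [Fact p.Prime] (F : Type*) [Field F] [Fintype F]
    [CharP F p] : AddChar F ℂ :=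
  letI : Algebra (ZMod p) F := ZMod.algebra F p
  ZMod.stdAddChar.compAddMonoidHom (Algebra.trace (ZMod p) F).toAddMonoidHom

section traceChar

variable (p : ℕ) [Fact p.Prime] (F : Type*) [Field F] [Fintype F] [CharP F p]

lemma traceChar_apply (x : F) :
    traceChar p F x =
      Complex.exp (2 * (Real.pi : ℂ) * Complex.I / (p : ℂ)) ^ (zmodTrace p F x).val := by
  rw [traceChar, AddChar.compAddMonoidHom_apply, ZMod.stdAddChar_apply, ZMod.toCircle_apply,
    ← Complex.exp_nat_mul]
  congr 1
  simp only [zmodTrace, LinearMap.toAddMonoidHom_coe]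
  ring

lemma traceChar_isPrimitive : (traceChar p F).IsPrimitive := by
  let _ : Algebra (ZMod p) F := ZMod.algebra F p
  refine AddChar.IsPrimitive.of_ne_one (AddChar.ne_one_iff.2 ?_)
  obtain ⟨x, hx⟩ := Algebra.trace_surjective (ZMod p) F 1
  refine ⟨x, fun h => one_ne_zero (ZMod.injective_stdAddChar (N := p) ?_)⟩
  rw [AddChar.map_zero_eq_one, ← h, ← hx]
  rfl

lemma weyl_eq_weylOp [DecidableEq F] : weyl p F = weylOp (traceChar p F) := by
  funext v
  ext x y
  simp only [weyl, weylOp, of_apply, traceChar_apply]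

lemma phaseObs_eq_covariantObs [DecidableEq F] (T : Matrix F F ℂ) :
    phaseObs p F T = covariantObs (traceChar p F) T := by
  funext v
  rw [phaseObs, covariantObs, weyl_eq_weylOp]

end traceChar

lemma two_ne_zero_of_charP {p : ℕ} [hp : Fact p.Prime] (hp2 : p ≠ 2) (R : Type*)
    [AddMonoidWithOne R] [CharP R p] : (2 : R) ≠ 0 := by
  have h : ((2 : ℕ) : R) ≠ 0 := (CharP.cast_eq_zero_iff R p 2).not.2
    fun h => hp2 ((Nat.prime_dvd_prime_iff_eq hp.out Nat.prime_two).1 h)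
  exact_mod_cast h

theorem stmt19_general (p : ℕ) [Fact p.Prime] (hp2 : p ≠ 2) (F : Type*) [Field F] [Fintype F]
    [DecidableEq F] [CharP F p] (T : Matrix F F ℂ) (hT : T.PosSemidef) :
    ((∀ v w : F × F, v ≠ w →
        (phaseObs p F T v * phaseObs p F T w).trace =
          1 / ((Fintype.card F : ℂ) ^ 2 * ((Fintype.card F : ℂ) + 1))) ∧
      (∀ v : F × F,
        (phaseObs p F T v * phaseObs p F T v).trace = 1 / (Fintype.card F : ℂ) ^ 2)) ↔
    (∀ v : F × F,
      (‖(T * weyl p F v).trace‖) ^ 2 =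
        (1 + (Fintype.card F : ℝ) * (if v = 0 then 1 else 0)) / ((Fintype.card F : ℝ) + 1)) := by
  have h2 : (2 : F) ≠ 0 := two_ne_zero_of_charP hp2 F
  have hψ := traceChar_isPrimitive p F
  rw [phaseObs_eq_covariantObs, weyl_eq_weylOp, covariantObs_sic_iff h2,
    norm_sq_trace_mul_weylOp_iff h2 hT.1, ← funext_iff, ← funext_iff,
    ← symplecticFourier_trace_mul_weylOp h2 hψ, symplecticFourier_eq_sicProfile_iff hψ]

theorem stmt19 (p : ℕ) [Fact p.Prime] (hp2 : p ≠ 2) (F : Type*) [Field F] [Fintype F]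
    [DecidableEq F] [CharP F p] (T : Matrix F F ℂ) (hT : T.PosSemidef) (hTtr : T.trace = 1) :
    ((∀ v w : F × F, v ≠ w →
        (phaseObs p F T v * phaseObs p F T w).trace =
          1 / ((Fintype.card F : ℂ) ^ 2 * ((Fintype.card F : ℂ) + 1))) ∧
      (∀ v : F × F,
        (phaseObs p F T v * phaseObs p F T v).trace = 1 / (Fintype.card F : ℂ) ^ 2)) ↔
    (∀ v : F × F,
      (‖(T * weyl p F v).trace‖) ^ 2 =
        (1 + (Fintype.card F : ℝ) * (if v = 0 then 1 else 0)) / ((Fintype.card F : ℝ) + 1)) :=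
  stmt19_general p hp2 F T hT
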